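/- arXiv:1012.1911 — 3 statements merged into one kernel-verified Lean document; each statement's English description precedes it below -/
import Mathlib

section
/- The transfer construction for the fixed point functor is functorial: for G-equivariant maps f : X → Y and g : Y → Z of finite G-sets and a G-monoid Q, one has (P_Q)_*(g ∘ f) = (P_Q)_*(g) ∘ (P_Q)_*(f), where ((P_Q)_*(f)(α))(y) = ∏_{x ∈ f⁻¹(y)} α(x). -/
attribute [local instance] Classical.propDecidable

noncomputable def transfer {X Y Q : Type} [Fintype X] [CommMonoid Q]
    (f : X → Y) (α : X → Q) : Y → Q :=
  fun y => ∏ x ∈ Finset.univ.filter (fun x => f x = y), α x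

theorem transfer_comp_general {Q X Y Z : Type} [CommMonoid Q]
    [Fintype X] [Fintype Y]
    (f : X → Y) (g : Y → Z)
    (α : X → Q) :
    transfer (g ∘ f) α = transfer g (transfer f α) := by
  funext z
  simp only [transfer]
  -- the fibre of `g ∘ f` over `z` is the disjoint union of the fibres of `f` over `g⁻¹(z)`
  rw [Finset.prod_fiberwise_eq_prod_filter _ _ f α]
  simp only [Finset.mem_filter, Finset.mem_univ, true_and, Function.comp_apply]

theorem transfer_comp {G Q X Y Z : Type} [Group G] [CommMonoid Q]
    [MulDistribMulAction G Q] [MulAction G X] [MulAction G Y] [MulAction G Z]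
    [Fintype X] [Fintype Y] [Fintype Z]
    (f : X → Y) (g : Y → Z)
    (hf : ∀ (s : G) (x : X), f (s • x) = s • f x)
    (hg : ∀ (s : G) (y : Y), g (s • y) = s • g y)
    (α : X → Q) (hα : ∀ (s : G) (x : X), α (s • x) = s • α x) :
    transfer (g ∘ f) α = transfer g (transfer f α) :=
  transfer_comp_general f g α
end

section
/- The fixed point functor satisfies the Mackey condition: given a pullback square in finite G-sets with vertices X', Y', X, Y and maps f' : X' → Y', x : X' → X, y : Y' → Y, f : X → Y, and a G-monoid Q, one has (P_Q)_*(x) ∘ (P_Q)^*(f') = (P_Q)^*(f) ∘ (P_Q)_*(y), where (P_Q)^*(h)(β) = β ∘ h is precomposition and (P_Q)_*(h) is the fiberwise-product transfer. -/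
/-!
STATEMENT 4: the Mackey condition for the fixed point functor: for a pullback square
of finite `G`-sets with maps `f' : X' → Y'`, `x : X' → X`, `y : Y' → Y`, `f : X → Y`,
one has `(P_Q)_*(x) ∘ (P_Q)^*(f') = (P_Q)^*(f) ∘ (P_Q)_*(y)`.
-/

attribute [local instance] Classical.propDecidable

section Pullback

variable {X' Y' X Y : Type} (f' : X' → Y') (xm : X' → X) (ym : Y' → Y) (f : X → Y)
  (hcomm : ∀ a : X', f (xm a) = ym (f' a))

theorem bijOn_fiber_of_isPullback
    (hpb : Function.Bijective
      (fun a : X' => (⟨(xm a, f' a), hcomm a⟩ : { q : X × Y' // f q.1 = ym q.2 })))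
    (x0 : X) : Set.BijOn f' {a | xm a = x0} {b | ym b = f x0} := by
  refine ⟨fun a (ha : xm a = x0) => ?_, fun a₁ (h₁ : xm a₁ = x0) a₂ (h₂ : xm a₂ = x0) h => ?_,
    fun b (hb : ym b = f x0) => ?_⟩
  · change ym (f' a) = f x0
    rw [← hcomm, ha]
  · exact hpb.1 (Subtype.ext (Prod.ext (h₁.trans h₂.symm) h))
  · obtain ⟨a, ha⟩ := hpb.2 ⟨(x0, b), hb.symm⟩
    exact ⟨a, (congrArg (fun q => q.1.1) ha : xm a = x0), congrArg (fun q => q.1.2) ha⟩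

theorem transfer_comp_eq_transfer_of_isPullback {Q : Type} [CommMonoid Q] [Fintype X'] [Fintype Y']
    (hpb : Function.Bijective
      (fun a : X' => (⟨(xm a, f' a), hcomm a⟩ : { q : X × Y' // f q.1 = ym q.2 })))
    (β : Y' → Q) (x0 : X) : transfer xm (β ∘ f') x0 = transfer ym β (f x0) := by
  have hfib := bijOn_fiber_of_isPullback f' xm ym f hcomm hpb x0
  rw [← Finset.coe_filter_univ, ← Finset.coe_filter_univ] at hfib
  exact Finset.prod_nbij f' (fun _ ha => hfib.mapsTo ha) hfib.injOn hfib.surjOn fun _ _ => rfl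

end Pullback

theorem fixedPointFunctor_mackey_condition_general
    {Q X' Y' X Y : Type} [CommMonoid Q]
    [Fintype X'] [Fintype Y']
    (f' : X' → Y') (xm : X' → X) (ym : Y' → Y) (f : X → Y)
    (hcomm : ∀ a : X', f (xm a) = ym (f' a))
    -- the square is a pullback: the canonical comparison map is bijective
    (hpb : Function.Bijective
      (fun a : X' => (⟨(xm a, f' a), hcomm a⟩ : { q : X × Y' // f q.1 = ym q.2 })))
    (β : Y' → Q) :
    transfer xm (fun a => β (f' a)) = fun x0 => transfer ym β (f x0) :=
  funext (transfer_comp_eq_transfer_of_isPullback f' xm ym f hcomm hpb β)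

theorem fixedPointFunctor_mackey_condition
    {G Q X' Y' X Y : Type} [Group G] [CommMonoid Q] [MulDistribMulAction G Q]
    [MulAction G X'] [MulAction G Y'] [MulAction G X] [MulAction G Y]
    [Fintype X'] [Fintype Y'] [Fintype X] [Fintype Y]
    (f' : X' → Y') (xm : X' → X) (ym : Y' → Y) (f : X → Y)
    (hf' : ∀ (g : G) a, f' (g • a) = g • f' a)
    (hxm : ∀ (g : G) a, xm (g • a) = g • xm a)
    (hym : ∀ (g : G) b, ym (g • b) = g • ym b)
    (hf : ∀ (g : G) a, f (g • a) = g • f a)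
    (hcomm : ∀ a : X', f (xm a) = ym (f' a))
    -- the square is a pullback: the canonical comparison map is bijective
    (hpb : Function.Bijective
      (fun a : X' => (⟨(xm a, f' a), hcomm a⟩ : { q : X × Y' // f q.1 = ym q.2 })))
    (β : Y' → Q) (hβ : ∀ (g : G) (b : Y'), β (g • b) = g • β b) :
    transfer xm (fun a => β (f' a)) = fun x0 => transfer ym β (f x0) :=
  fixedPointFunctor_mackey_condition_general f' xm ym f hcomm hpb β
end

section
/- Let Q be a commutative monoid with an action of a finite group G by monoid automorphisms, f : X → Y a G-map of finite G-sets, p_Q : X × Q → Q and p'_Q : Y × Q → Q the projections, and e : X ×_Y Π_f(X × Q) → X × Q the evaluation map of the canonical exponential diagram generated by f and the projection p_X : X × Q → X. Define μ_f : Π_f(X × Q) → Y × Q by μ_f(y,σ) = (y, ∏_{x ∈ f⁻¹(y)} p_Q(σ(x))). Then μ_f is G-equivariant and satisfies p'_Q ∘ μ_f = (P_Q)_*(f')(p_Q ∘ e), where f' : X ×_Y Π_f(X × Q) → Π_f(X × Q) is the pullback of f and (P_Q)_* denotes the fiberwise-product transfer of G-equivariant maps to Q. -/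
/-!
Translation by `g` maps `f⁻¹(y)` bijectively onto `f⁻¹(g y)`; reindexing along it turns
`∏_{x ∈ f⁻¹(g y)} g (σ (g⁻¹ x))` into `g (∏_{x ∈ f⁻¹(y)} σ x)`, as `G` acts by monoid
automorphisms. The fibre of `f'` over `(y, σ)` is `{(x, (y, σ)) | x ∈ f⁻¹(y)}`, on which `e`
is `σ`, so the transfer along `f'` is the product defining `μ_f`.
-/

attribute [local instance] Classical.propDecidable

variable {G Q X Y : Type} [Group G] [CommMonoid Q] [MulDistribMulAction G Q] [Fintype Q]
  [MulAction G X] [MulAction G Y] [Fintype X] [Fintype Y]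

/-- `Π_f(X × Q)` for `p_X : X × Q → X` the projection. -/
def PiFQ (f : X → Y) : Type :=
  Σ y : Y, { σ : { x : X // f x = y } → X × Q // ∀ x, (σ x).1 = (x : X) }

/-- The `G`-action `g • (y, σ) = (g • y, x ↦ g • σ (g⁻¹ • x))` on `Π_f(X × Q)`. -/
def piSmulQ (f : X → Y) (hf : ∀ (g : G) (x : X), f (g • x) = g • f x)
    (g : G) (z : PiFQ (Q := Q) f) : PiFQ (Q := Q) f :=
  ⟨g • z.1,
    ⟨fun x => g • z.2.1 ⟨g⁻¹ • (x : X), by rw [hf, x.2, inv_smul_smul]⟩,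
      fun x => by simp only [Prod.smul_fst, z.2.2, smul_inv_smul]⟩⟩

/-- `μ_f : Π_f(X × Q) → Y × Q`, `(y, σ) ↦ (y, ∏_{x ∈ f⁻¹(y)} p_Q (σ x))`. -/
noncomputable def muF (f : X → Y) (z : PiFQ (Q := Q) f) : Y × Q :=
  (z.1, ∏ x : { x : X // f x = z.1 }, (z.2.1 x).2)

/-- The pullback `X ×_Y Π_f(X × Q)` of `f` and `π`. -/
def PB (f : X → Y) : Type :=
  { w : X × PiFQ (Q := Q) f // f w.1 = w.2.1 }

/-- The evaluation map `e : X ×_Y Π_f(X × Q) → X × Q`. -/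
def eMap (f : X → Y) (w : PB (Q := Q) f) : X × Q :=
  w.1.2.2.1 ⟨w.1.1, w.2⟩

/-- The pullback `f'` of `f` along `π`. -/
def fPrime (f : X → Y) (w : PB (Q := Q) f) : PiFQ (Q := Q) f :=
  w.1.2

instance (f : X → Y) : Finite (PiFQ (Q := Q) f) := by unfold PiFQ; infer_instance

instance (f : X → Y) : Finite (PB (Q := Q) f) := by unfold PB; infer_instance

noncomputable instance (f : X → Y) : Fintype (PiFQ (Q := Q) f) := Fintype.ofFinite _

noncomputable instance (f : X → Y) : Fintype (PB (Q := Q) f) := Fintype.ofFinite _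

def fiberSmulEquiv {M α β : Type*} [Group M] [MulAction M α] [MulAction M β] (f : α → β)
    (hf : ∀ (g : M) (x : α), f (g • x) = g • f x) (g : M) (y : β) :
    { x // f x = y } ≃ { x // f x = g • y } where
  toFun x := ⟨g • x.1, by rw [hf, x.2]⟩
  invFun x := ⟨g⁻¹ • x.1, by rw [hf, x.2, inv_smul_smul]⟩
  left_inv x := by simp
  right_inv x := by simp

theorem muF_piSmulQ {G Q X Y : Type} [Group G] [CommMonoid Q] [MulDistribMulAction G Q]
    [MulAction G X] [MulAction G Y] [Fintype X] (f : X → Y)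
    (hf : ∀ (g : G) (x : X), f (g • x) = g • f x) (g : G) (z : PiFQ (Q := Q) f) :
    muF f (piSmulQ f hf g z) = g • muF f z := by
  refine Prod.ext rfl ?_
  simp only [muF, piSmulQ, Prod.smul_snd, Finset.smul_prod']
  exact Fintype.prod_equiv (fiberSmulEquiv f hf g z.1).symm _ _ fun _ => rfl

def fiberFPrimeEquiv (f : X → Y) (z : PiFQ (Q := Q) f) :
    { x // f x = z.1 } ≃ { w : PB (Q := Q) f // fPrime f w = z } where
  toFun x := ⟨⟨(x.1, z), x.2⟩, rfl⟩
  invFun w := ⟨w.1.1.1, w.1.2.trans (congrArg Sigma.fst w.2)⟩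
  left_inv _ := rfl
  right_inv := by
    rintro ⟨w, rfl⟩
    rfl

theorem muF_snd_eq_prod_fPrime_fiber {Q X Y : Type} [CommMonoid Q] [Fintype Q] [Fintype X]
    [Fintype Y] (f : X → Y) (z : PiFQ (Q := Q) f) :
    (muF f z).2
      = ∏ w ∈ Finset.univ.filter (fun w : PB (Q := Q) f => fPrime f w = z), (eMap f w).2 := by
  rw [Finset.prod_subtype _ fun _ => Finset.mem_filter_univ _]
  exact Fintype.prod_equiv (fiberFPrimeEquiv f z) _ _ fun _ => rfl

theorem muF_equivariant_and_transfer (f : X → Y)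
    (hf : ∀ (g : G) (x : X), f (g • x) = g • f x) :
    -- `μ_f` is `G`-equivariant:
    (∀ (g : G) (z : PiFQ (Q := Q) f), muF f (piSmulQ f hf g z) = g • muF f z) ∧
    -- `p'_Q ∘ μ_f = (P_Q)_*(f')(p_Q ∘ e)`:
    (∀ z : PiFQ (Q := Q) f,
      (muF f z).2
        = ∏ w ∈ Finset.univ.filter (fun w : PB (Q := Q) f => fPrime f w = z),
            (eMap f w).2) := ⟨muF_piSmulQ f hf, muF_snd_eq_prod_fPrime_fiber f⟩
end
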